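/- Let (X,d,μ) be a metric measure space with μ Borel regular, and let x = (x¹,…,x^N) be an N-tuple of real-valued Lipschitz functions on X. Then Ind(x), the set of points of X at which x is not dependent to first order, is a measurable subset of X. -/

import Mathlib

open Metric MeasureTheory Filter Set
open scoped NNReal ENNReal

/-- The variation of `f` on the ball `B(x,r)`: `sup { |f y - f x| / r : y ∈ B(x,r) }`. -/
noncomputable def varBall {X : Type*} [MetricSpace X] (f : X → ℝ) (x : X) (r : ℝ) : ℝ :=
  sSup ((fun y => |f y - f x| / r) '' Metric.ball x r)

/-- Lower pointwise Lipschitz constant `lip_x f`. -/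
noncomputable def lipLow {X : Type*} [MetricSpace X] (f : X → ℝ) (x : X) : ℝ :=
  Filter.liminf (fun r => varBall f x r) (nhdsWithin 0 (Set.Ioi (0:ℝ)))

/-- Upper pointwise Lipschitz constant `Lip_x f`. -/
noncomputable def lipUp {X : Type*} [MetricSpace X] (f : X → ℝ) (x : X) : ℝ :=
  Filter.limsup (fun r => varBall f x r) (nhdsWithin 0 (Set.Ioi (0:ℝ)))

/-- `f` is a real-valued Lipschitz function. -/
def IsLip {X : Type*} [MetricSpace X] (f : X → ℝ) : Prop := ∃ K : ℝ≥0, LipschitzWith K f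

/-- `μ` is doubling with constant `C`. -/
def DoublingWith {X : Type*} [MetricSpace X] [MeasurableSpace X] (μ : Measure X) (C : ℝ≥0) :
    Prop :=
  ∀ (x : X) (r : ℝ), 0 < r → μ (Metric.ball x (2 * r)) ≤ (C : ℝ≥0∞) * μ (Metric.ball x r)

/-- `(X, μ)` admits a `p`-Poincaré inequality with constant `L`. -/
def PoincareIneq {X : Type*} [MetricSpace X] [MeasurableSpace X] (μ : Measure X) (p L : ℝ) :
    Prop :=
  (∀ (x : X) (r : ℝ), 0 < r → 0 < μ (Metric.ball x r) ∧ μ (Metric.ball x r) < ⊤) ∧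
  ∀ f : X → ℝ, IsLip f → ∀ (x : X) (r : ℝ), 0 < r →
    ⨍ y in Metric.ball x r, |f y - ⨍ z in Metric.ball x r, f z ∂μ| ∂μ ≤
      L * r * (⨍ z in Metric.ball x (L * r), (lipLow f z) ^ p ∂μ) ^ (1 / p)

/-- An `N`-tuple of functions is dependent to first order at `x`. -/
def DependentAt {X : Type*} [MetricSpace X] {N : ℕ} (f : Fin N → X → ℝ) (x : X) : Prop :=
  ∃ l : Fin N → ℝ, l ≠ 0 ∧ lipUp (fun y => ∑ i, l i * f i y) x = 0

/-- A measurable differentiable structure of dimension at most `N₀`. -/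
def HasMDS {X : Type*} [MetricSpace X] [MeasurableSpace X] (μ : Measure X) (N₀ : ℕ) : Prop :=
  ∃ (ι : Type) (_ : Countable ι) (U : ι → Set X) (N : ι → ℕ)
      (φ : (i : ι) → Fin (N i) → X → ℝ),
    (∀ i, MeasurableSet (U i) ∧ 0 < μ (U i)) ∧
    μ (Set.univ \ ⋃ i, U i) = 0 ∧
    (∀ i, N i ≤ N₀) ∧
    (∀ i k, IsLip (φ i k)) ∧
    (∀ f : X → ℝ, IsLip f → ∀ i, ∃ df : X → (Fin (N i) → ℝ),
      Measurable df ∧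
      (∀ᵐ x ∂(μ.restrict (U i)),
        lipUp (fun y => f y - ∑ k, df x k * φ i k y) x = 0) ∧
      ∀ dg : X → (Fin (N i) → ℝ), Measurable dg →
        (∀ᵐ x ∂(μ.restrict (U i)),
          lipUp (fun y => f y - ∑ k, dg x k * φ i k y) x = 0) →
        (∀ᵐ x ∂(μ.restrict (U i)), df x = dg x))

/-!
For fixed `x`, `λ ↦ Lip_x (λ · f)` is subadditive and absolutely homogeneous, hence Lipschitz in
`λ` uniformly in `x`; for fixed `λ` it is Borel in `x`, being a limsup over rational radii of the
lower semicontinuous functions `x ↦ var_{x,r}`. Dependence at `x` means that this function vanishes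
somewhere on the (compact) unit sphere, which by continuity happens iff it is arbitrarily small on
a fixed countable dense subset of the sphere: a countable intersection of countable unions of
Borel sets.
-/

open Topology

section VarBall

variable {X : Type*} [MetricSpace X] {g h : X → ℝ} {K K' : ℝ≥0} {x y : X} {r : ℝ}

lemma varBall_nonneg (g : X → ℝ) (x : X) (r : ℝ) : 0 ≤ varBall g x r :=
  Real.sSup_nonneg <| by
    rintro _ ⟨y, hy, rfl⟩
    exact div_nonneg (abs_nonneg _) (dist_nonneg.trans (mem_ball.mp hy).le)

lemma LipschitzWith.abs_sub_div_le (hg : LipschitzWith K g) (hy : y ∈ ball x r) :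
    |g y - g x| / r ≤ K := by
  have hr : 0 < r := dist_nonneg.trans_lt (mem_ball.mp hy)
  rw [div_le_iff₀ hr, ← Real.dist_eq]
  exact (hg.dist_le_mul y x).trans (mul_le_mul_of_nonneg_left (mem_ball.mp hy).le K.coe_nonneg)

lemma LipschitzWith.varBall_le (hg : LipschitzWith K g) (x : X) (r : ℝ) : varBall g x r ≤ K :=
  Real.sSup_le (by rintro _ ⟨y, hy, rfl⟩; exact hg.abs_sub_div_le hy) K.coe_nonneg

lemma LipschitzWith.le_varBall (hg : LipschitzWith K g) (hy : y ∈ ball x r) :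
    |g y - g x| / r ≤ varBall g x r :=
  le_csSup ⟨K, by rintro _ ⟨z, hz, rfl⟩; exact hg.abs_sub_div_le hz⟩ ⟨y, hy, rfl⟩

lemma LipschitzWith.isBoundedUnder_varBall (hg : LipschitzWith K g) (x : X) :
    IsBoundedUnder (· ≤ ·) (𝓝[>] 0) (varBall g x) :=
  isBoundedUnder_of ⟨K, hg.varBall_le x⟩

lemma isBoundedUnder_ge_varBall (g : X → ℝ) (x : X) :
    IsBoundedUnder (· ≥ ·) (𝓝[>] 0) (varBall g x) :=
  isBoundedUnder_of ⟨0, varBall_nonneg g x⟩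

lemma isCoboundedUnder_le_varBall (g : X → ℝ) (x : X) :
    IsCoboundedUnder (· ≤ ·) (𝓝[>] 0) (varBall g x) :=
  isCoboundedUnder_le_of_le _ (varBall_nonneg g x)

lemma LipschitzWith.lipUp_nonneg (hg : LipschitzWith K g) (x : X) : 0 ≤ lipUp g x :=
  le_limsup_of_frequently_le (.of_forall (varBall_nonneg g x)) (hg.isBoundedUnder_varBall x)

lemma LipschitzWith.lipUp_le (hg : LipschitzWith K g) (x : X) : lipUp g x ≤ K :=
  limsup_le_of_le (isCoboundedUnder_le_varBall g x) (.of_forall (hg.varBall_le x))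

lemma LipschitzWith.varBall_add_le (hg : LipschitzWith K g) (hh : LipschitzWith K' h) (x : X)
    (r : ℝ) : varBall (fun y => g y + h y) x r ≤ varBall g x r + varBall h x r := by
  refine Real.sSup_le ?_ (add_nonneg (varBall_nonneg g x r) (varBall_nonneg h x r))
  rintro _ ⟨y, hy, rfl⟩
  have hr : 0 < r := dist_nonneg.trans_lt (mem_ball.mp hy)
  calc |g y + h y - (g x + h x)| / r ≤ |g y - g x| / r + |h y - h x| / r := by
        rw [← add_div, add_sub_add_comm]
        gcongr
        exact abs_add_le _ _
    _ ≤ varBall g x r + varBall h x r := add_le_add (hg.le_varBall hy) (hh.le_varBall hy)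

lemma LipschitzWith.lipUp_add_le (hg : LipschitzWith K g) (hh : LipschitzWith K' h) (x : X) :
    lipUp (fun y => g y + h y) x ≤ lipUp g x + lipUp h x :=
  (limsup_le_limsup (.of_forall (hg.varBall_add_le hh x)) (isCoboundedUnder_le_varBall _ x)
      (isBoundedUnder_of ⟨K + K', fun r => by
        grw [hg.varBall_le x r, hh.varBall_le x r]⟩)).trans
    (limsup_add_le (isBoundedUnder_ge_varBall g x) (hg.isBoundedUnder_varBall x)
      (isCoboundedUnder_le_varBall h x) (hh.isBoundedUnder_varBall x))

lemma varBall_const_mul (c : ℝ) (g : X → ℝ) (x : X) (r : ℝ) :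
    varBall (fun y => c * g y) x r = |c| * varBall g x r := by
  have hfun : (fun y => |c * g y - c * g x| / r) = fun y => |c| • (|g y - g x| / r) := by
    funext y
    rw [← mul_sub, abs_mul, smul_eq_mul, mul_div_assoc]
  rw [varBall, varBall, hfun, ← Set.image_image (|c| • ·), Set.image_smul,
    Real.sSup_smul_of_nonneg (abs_nonneg c), smul_eq_mul]

lemma LipschitzWith.lipUp_const_mul (hg : LipschitzWith K g) (c : ℝ) (x : X) :
    lipUp (fun y => c * g y) x = |c| * lipUp g x := by
  simp only [lipUp, varBall_const_mul]
  exact ((monotone_mul_left_of_nonneg (abs_nonneg c)).map_limsup_of_continuousAt _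
    (continuous_const_mul _).continuousAt (hg.isBoundedUnder_varBall x)
    (isCoboundedUnder_le_varBall g x)).symm

end VarBall

section Measurability

variable {X : Type*} [MetricSpace X] {g : X → ℝ} {K : ℝ≥0}

lemma LipschitzWith.lowerSemicontinuous_varBall (hg : LipschitzWith K g) {r : ℝ} (hr : 0 < r) :
    LowerSemicontinuous fun x => varBall g x r := by
  intro x₀ t ht
  obtain ⟨_, ⟨y, hy, rfl⟩, hty⟩ :=
    exists_lt_of_lt_csSup ((nonempty_ball.mpr hr).image _) ht
  have hopen : IsOpen ({x | dist y x < r} ∩ {x | t < |g y - g x| / r}) :=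
    (isOpen_lt (continuous_const.dist continuous_id) continuous_const).inter
      (isOpen_lt continuous_const ((continuous_const.sub hg.continuous).abs.div_const r))
  filter_upwards [hopen.mem_nhds ⟨mem_ball.mp hy, hty⟩] with x hx
  exact hx.2.trans_le (hg.le_varBall (mem_ball.mpr hx.1))

/-- The open ball `B(x,r)` is the union of the balls `B(x,q)`, `q < r` rational. -/
lemma LipschitzWith.varBall_le_of_forall_rat (hg : LipschitzWith K g) {x : X} {r a : ℝ}
    (hr : 0 < r) (h : ∀ q : ℚ, 0 < (q : ℝ) → (q : ℝ) < r → varBall g x q ≤ a) :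
    varBall g x r ≤ a := by
  refine csSup_le ((nonempty_ball.mpr hr).image _) ?_
  rintro _ ⟨y, hy, rfl⟩
  obtain ⟨q, hyq, hqr⟩ := exists_rat_btwn (mem_ball.mp hy)
  have hq : 0 < (q : ℝ) := dist_nonneg.trans_lt hyq
  calc |g y - g x| / r ≤ |g y - g x| / q := by gcongr
    _ ≤ varBall g x q := hg.le_varBall (mem_ball.mpr hyq)
    _ ≤ a := h q hq hqr

lemma LipschitzWith.lipUp_lt_iff (hg : LipschitzWith K g) (x : X) {c : ℝ} :
    lipUp g x < c ↔ ∃ a : ℚ, (a : ℝ) < c ∧ ∃ ε : ℚ, 0 < (ε : ℝ) ∧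
      ∀ q : ℚ, 0 < (q : ℝ) → (q : ℝ) < ε → varBall g x q ≤ a := by
  constructor
  · intro h
    obtain ⟨a, hla, hac⟩ := exists_rat_btwn h
    obtain ⟨ε', hε', hball⟩ := (nhdsGT_basis (0 : ℝ)).eventually_iff.mp
      (eventually_lt_of_limsup_lt hla (hg.isBoundedUnder_varBall x))
    obtain ⟨ε, hε, hεε'⟩ := exists_rat_btwn hε'
    exact ⟨a, hac, ε, hε, fun q hq hqε => (hball ⟨hq, hqε.trans hεε'⟩).le⟩
  · rintro ⟨a, hac, ε, hε, h⟩
    refine lt_of_le_of_lt (limsup_le_of_le (isCoboundedUnder_le_varBall g x) ?_) hac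
    filter_upwards [Ioo_mem_nhdsGT hε] with r hr
    exact hg.varBall_le_of_forall_rat hr.1 fun q hq hqr => h q hq (hqr.trans hr.2)

lemma LipschitzWith.measurable_lipUp [MeasurableSpace X] [BorelSpace X]
    (hg : LipschitzWith K g) : Measurable (lipUp g) := by
  refine measurable_of_Iio fun c => ?_
  have hset : lipUp g ⁻¹' Iio c = ⋃ (a : ℚ) (_ : (a : ℝ) < c) (ε : ℚ) (_ : 0 < (ε : ℝ)),
      ⋂ (q : ℚ) (_ : 0 < (q : ℝ)) (_ : (q : ℝ) < ε), {x | varBall g x q ≤ a} := by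
    ext x
    simp only [mem_preimage, mem_Iio, hg.lipUp_lt_iff, mem_iUnion, mem_iInter, mem_ofPred_eq,
      exists_prop]
  rw [hset]
  refine .iUnion fun a => .iUnion fun _ => .iUnion fun ε => .iUnion fun _ =>
    .iInter fun q => .iInter fun hq => .iInter fun _ => ?_
  exact measurableSet_le (hg.lowerSemicontinuous_varBall hq).measurable measurable_const

end Measurability

section LinearCombination

variable {X ι : Type*} [MetricSpace X] [Fintype ι] {f : ι → X → ℝ} {K : ι → ℝ≥0}

lemma lipschitzWith_sum_mul (hf : ∀ i, LipschitzWith (K i) (f i)) (l : ι → ℝ) :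
    LipschitzWith (‖l‖₊ * ∑ i, K i) fun y => ∑ i, l i * f i y := by
  refine LipschitzWith.of_dist_le_mul fun y z => ?_
  calc dist (∑ i, l i * f i y) (∑ i, l i * f i z) ≤ ∑ i, ‖l i‖ * dist (f i y) (f i z) := by
        refine (dist_sum_sum_le _ _ _).trans_eq ?_
        simp only [← smul_eq_mul, dist_smul₀]
    _ ≤ ∑ i, ‖l‖ * (K i * dist y z) := by
        gcongr with i
        · exact norm_le_pi_norm l i
        · exact (hf i).dist_le_mul y z
    _ = ↑(‖l‖₊ * ∑ i, K i) * dist y z := by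
        push_cast
        rw [← Finset.mul_sum, ← Finset.sum_mul, mul_assoc]

lemma lipschitzWith_lipUp_sum_mul (hf : ∀ i, LipschitzWith (K i) (f i)) (x : X) :
    LipschitzWith (∑ i, K i) fun l : ι → ℝ => lipUp (fun y => ∑ i, l i * f i y) x := by
  refine LipschitzWith.of_le_add_mul _ fun l m => ?_
  have hsplit : (fun y => ∑ i, l i * f i y) =
      fun y => (∑ i, m i * f i y) + ∑ i, (l - m) i * f i y := by
    funext y
    simp only [Pi.sub_apply, sub_mul, Finset.sum_sub_distrib, add_sub_cancel]
  calc lipUp (fun y => ∑ i, l i * f i y) x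
      ≤ lipUp (fun y => ∑ i, m i * f i y) x + lipUp (fun y => ∑ i, (l - m) i * f i y) x := by
        rw [hsplit]
        exact (lipschitzWith_sum_mul hf m).lipUp_add_le (lipschitzWith_sum_mul hf (l - m)) x
    _ ≤ lipUp (fun y => ∑ i, m i * f i y) x + ↑(‖l - m‖₊ * ∑ i, K i) := by
        grw [(lipschitzWith_sum_mul hf (l - m)).lipUp_le x]
    _ = lipUp (fun y => ∑ i, m i * f i y) x + ↑(∑ i, K i) * dist l m := by
        rw [dist_eq_norm, NNReal.coe_mul, coe_nnnorm, mul_comm]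

lemma lipUp_smul_sum_mul (hf : ∀ i, LipschitzWith (K i) (f i)) (c : ℝ) (l : ι → ℝ) (x : X) :
    lipUp (fun y => ∑ i, (c • l) i * f i y) x = |c| * lipUp (fun y => ∑ i, l i * f i y) x := by
  simp only [Pi.smul_apply, smul_eq_mul, mul_assoc, ← Finset.mul_sum]
  exact (lipschitzWith_sum_mul hf l).lipUp_const_mul c x

lemma dependentAt_iff_exists_mem_sphere {N : ℕ} {f : Fin N → X → ℝ} {K : Fin N → ℝ≥0}
    (hf : ∀ i, LipschitzWith (K i) (f i)) (x : X) :
    DependentAt f x ↔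
      ∃ l ∈ sphere (0 : Fin N → ℝ) 1, lipUp (fun y => ∑ i, l i * f i y) x ≤ 0 := by
  constructor
  · rintro ⟨l, hl, h0⟩
    refine ⟨‖l‖⁻¹ • l, by simp [norm_smul, norm_ne_zero_iff.mpr hl], ?_⟩
    rw [lipUp_smul_sum_mul hf, h0, mul_zero]
  · rintro ⟨l, hl, hle⟩
    refine ⟨l, ?_, hle.antisymm ((lipschitzWith_sum_mul hf l).lipUp_nonneg x)⟩
    rintro rfl
    simp at hl

end LinearCombination

lemma IsCompact.exists_le_zero_iff_of_subset_closure {E : Type*} [TopologicalSpace E]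
    {S D : Set E} {p : E → ℝ} (hS : IsCompact S) (hp : ContinuousOn p S) (hDS : D ⊆ S)
    (hSD : S ⊆ closure D) :
    (∃ l ∈ S, p l ≤ 0) ↔ ∀ n : ℕ, ∃ l ∈ D, p l < 1 / (n + 1) := by
  constructor
  · rintro ⟨l, hlS, hl⟩ n
    have hlt : ∀ᶠ m in 𝓝[S] l, p m < 1 / (n + 1) :=
      hp l hlS (Iio_mem_nhds (hl.trans_lt Nat.one_div_pos_of_nat))
    have := mem_closure_iff_nhdsWithin_neBot.mp (hSD hlS)
    obtain ⟨m, hm, hmD⟩ := ((hlt.filter_mono (nhdsWithin_mono l hDS)).and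
      self_mem_nhdsWithin).exists
    exact ⟨m, hmD, hm⟩
  · intro h
    obtain ⟨l, hlD, -⟩ := h 0
    obtain ⟨l₀, hl₀S, hmin⟩ := hS.exists_isMinOn ⟨l, hDS hlD⟩ hp
    refine ⟨l₀, hl₀S, ge_of_tendsto' tendsto_one_div_add_atTop_nhds_zero_nat fun n => ?_⟩
    obtain ⟨l, hlD, hl⟩ := h n
    exact (hmin (hDS hlD)).trans hl.le

theorem ind_measurable_general
    (X : Type*) [MetricSpace X] [MeasurableSpace X] [BorelSpace X]
    (N : ℕ) (xs : Fin N → X → ℝ) (hxs : ∀ k, IsLip (xs k)) :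
    MeasurableSet {x : X | ¬ DependentAt xs x} := by
  choose K hK using hxs
  have hS := isCompact_sphere (0 : Fin N → ℝ) 1
  obtain ⟨D, hDS, hDc, hSD⟩ := hS.isSeparable.exists_countable_dense_subset
  have hdep : {x | DependentAt xs x} =
      ⋂ n : ℕ, ⋃ l ∈ D, {x | lipUp (fun y => ∑ i, l i * xs i y) x < 1 / (n + 1)} := by
    ext x
    simp only [mem_ofPred_eq, mem_iInter, mem_iUnion, exists_prop]
    rw [dependentAt_iff_exists_mem_sphere hK, hS.exists_le_zero_iff_of_subset_closure
      (lipschitzWith_lipUp_sum_mul hK x).continuous.continuousOn hDS hSD]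
  change MeasurableSet {x | DependentAt xs x}ᶜ
  rw [hdep]
  exact (MeasurableSet.iInter fun n => .biUnion hDc fun l _ =>
    measurableSet_lt (lipschitzWith_sum_mul hK l).measurable_lipUp measurable_const).compl

/-- Lemma 4.4: for an `N`-tuple `xs` of Lipschitz functions, the set
`Ind(xs)` of points where `xs` is not dependent to first order is measurable. -/
theorem ind_measurable
    (X : Type*) [MetricSpace X] [MeasurableSpace X] [BorelSpace X]
    (μ : Measure X) (N : ℕ) (xs : Fin N → X → ℝ) (hxs : ∀ k, IsLip (xs k)) :
    MeasurableSet {x : X | ¬ DependentAt xs x} :=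
  ind_measurable_general X N xs hxs
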